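/- Let X_1,…,X_M with X_m ∈ ℝ^{D_m×N} be matrices such that each X_mᵀ X_m ∈ ℝ^{N×N} is invertible, let L ∈ ℝ^{N×N} be a graph Laplacian with eigenvalues μ_1 ≤ μ_2 ≤ … ≤ μ_N, and let γ ≥ 0. Then the minimum of Σ_{m=1}^M ‖A_mᵀ X_mᵀ X_m − S‖_F² + γ Tr(S L Sᵀ) over all A_m ∈ ℝ^{N×d} and all S ∈ ℝ^{d×N} with S Sᵀ = I_d equals γ Σ_{i=1}^d μ_i; the minimum is attained when the rows of S are orthonormal eigenvectors of L associated with its d smallest eigenvalues (equivalently, the d principal eigenvectors of M·I − γL) and A_m = (X_mᵀ X_m)^{-1} Sᵀ for each m — so the optimal S does not depend on the data X_1,…,X_M. -/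

import Mathlib

/-!
The data terms can always be made to vanish: for any feasible `S`, the dual
`Aₘ = (XₘᵀXₘ)⁻¹Sᵀ` gives `AₘᵀXₘᵀXₘ = S` because `XₘᵀXₘ` is symmetric and invertible.
What remains is Ky Fan's minimum principle for `min Tr(S L Sᵀ)` over `S Sᵀ = I_d`.
Writing `L = Pᵀ diag(μ) P` with `P` orthogonal and `Q = S Pᵀ`, one gets
`Tr(S L Sᵀ) = ∑ₖ μₖ cₖ`, where the `cₖ = (QᵀQ)ₖₖ` are the diagonal entries of an
orthogonal projection of rank `d`. Hence `0 ≤ cₖ ≤ 1` and `∑ cₖ = d`, and such weights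
put at least `μ₁ + ⋯ + μ_d` on a nondecreasing `μ`.
-/

open Matrix BigOperators

/-- Squared Frobenius norm of a real matrix: `‖A‖_F² = ∑ᵢ ∑ⱼ Aᵢⱼ²`. -/
noncomputable def frobSq {m n : Type*} [Fintype m] [Fintype n]
    (A : Matrix m n ℝ) : ℝ :=
  ∑ i, ∑ j, (A i j) ^ 2

lemma frobSq_nonneg {m n : Type*} [Fintype m] [Fintype n] (A : Matrix m n ℝ) :
    0 ≤ frobSq A :=
  Finset.sum_nonneg fun i _ => Finset.sum_nonneg fun j _ => sq_nonneg (A i j)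

lemma frobSq_zero {m n : Type*} [Fintype m] [Fintype n] : frobSq (0 : Matrix m n ℝ) = 0 := by
  simp [frobSq]

theorem Finset.sum_le_sum_mul_of_le_of_sum_eq_card {ι : Type*} [Fintype ι] [DecidableEq ι]
    (μ c : ι → ℝ) (s : Finset ι) (hsep : ∀ i ∈ s, ∀ j ∉ s, μ i ≤ μ j)
    (hc : ∀ k, c k ∈ Set.Icc (0 : ℝ) 1) (hsum : ∑ k, c k = s.card) :
    ∑ i ∈ s, μ i ≤ ∑ k, μ k * c k := by
  rcases s.eq_empty_or_nonempty with rfl | hs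
  · have hc0 : ∀ k, c k = 0 := by
      simpa [Finset.sum_eq_zero_iff_of_nonneg fun k _ => (hc k).1] using hsum
    simp [hc0]
  obtain ⟨i₀, hi₀, hτ⟩ := s.exists_mem_eq_sup' hs μ
  set τ := s.sup' hs μ
  -- the mass that `c` lacks on `s`, where `μ ≤ τ`, reappears on `sᶜ`, where `μ ≥ τ`
  have h_mass : ∑ k ∈ s, (1 - c k) = ∑ k ∈ sᶜ, c k := by
    have := s.sum_add_sum_compl c
    simp only [Finset.sum_sub_distrib, Finset.sum_const, nsmul_eq_mul, mul_one]
    linarith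
  have h_in : ∑ k ∈ s, μ k * (1 - c k) ≤ τ * ∑ k ∈ sᶜ, c k := by
    rw [← h_mass, Finset.mul_sum]
    exact Finset.sum_le_sum fun k hk =>
      mul_le_mul_of_nonneg_right (s.le_sup' μ hk) (sub_nonneg.mpr (hc k).2)
  have h_out : τ * ∑ k ∈ sᶜ, c k ≤ ∑ k ∈ sᶜ, μ k * c k := by
    rw [Finset.mul_sum, hτ]
    exact Finset.sum_le_sum fun k hk =>
      mul_le_mul_of_nonneg_right (hsep i₀ hi₀ k (Finset.mem_compl.mp hk)) (hc k).1
  have h_split := s.sum_add_sum_compl fun k => μ k * c k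
  simp only [mul_sub, mul_one, Finset.sum_sub_distrib] at h_in
  linarith

namespace Matrix

variable {m n : Type*} [Fintype n]

theorem diag_mem_Icc_of_isSymm_of_isIdempotentElem {G : Matrix n n ℝ}
    (hsymm : G.IsSymm) (hidem : IsIdempotentElem G) (k : n) : G k k ∈ Set.Icc (0 : ℝ) 1 := by
  have hsq : G k k ^ 2 ≤ G k k :=
    calc G k k ^ 2 ≤ ∑ j, G k j ^ 2 :=
          Finset.single_le_sum (fun j _ => sq_nonneg (G k j)) (Finset.mem_univ k)
      _ = (G * G) k k := by simp only [mul_apply, sq, hsymm.apply k]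
      _ = G k k := by rw [hidem.eq]
  constructor <;> nlinarith

theorem trace_mul_diagonal_mul_transpose [Fintype m] [DecidableEq n] (Q : Matrix m n ℝ)
    (μ : n → ℝ) : (Q * diagonal μ * Qᵀ).trace = ∑ k, μ k * (Qᵀ * Q) k k := by
  rw [trace_mul_cycle]
  simp [trace, mul_diagonal, mul_comm]

theorem of_mul_transpose_of_eq_one [DecidableEq m] (W : m → n → ℝ)
    (hW : ∀ i j, W i ⬝ᵥ W j = if i = j then 1 else 0) : of W * (of W)ᵀ = 1 := by
  ext i j
  simpa [mul_apply, one_apply, dotProduct] using hW i j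

theorem mul_transpose_of_eq_transpose_of_mul_diagonal [Fintype m] [DecidableEq m]
    (L : Matrix n n ℝ) (W : m → n → ℝ) (ν : m → ℝ) (hW : ∀ i, L *ᵥ W i = ν i • W i) :
    L * (of W)ᵀ = (of W)ᵀ * diagonal ν := by
  ext a i
  rw [mul_diagonal]
  simpa [mul_apply, mulVec, dotProduct, mul_comm] using congrFun (hW i) a

theorem sum_le_trace_mul_mul_transpose [Fintype m] [DecidableEq m] [DecidableEq n]
    (L P : Matrix n n ℝ) (μ : n → ℝ) (hP : Pᵀ * P = 1) (hLP : L * Pᵀ = Pᵀ * diagonal μ)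
    (s : Finset n) (hsep : ∀ i ∈ s, ∀ j ∉ s, μ i ≤ μ j) (hs : s.card = Fintype.card m)
    (S : Matrix m n ℝ) (hS : S * Sᵀ = 1) : ∑ i ∈ s, μ i ≤ (S * L * Sᵀ).trace := by
  set Q := S * Pᵀ
  have hQ : Q * Qᵀ = 1 :=
    calc Q * Qᵀ = S * (Pᵀ * P) * Sᵀ := by
          simp only [Q, transpose_mul, transpose_transpose, Matrix.mul_assoc]
      _ = 1 := by rw [hP, Matrix.mul_one, hS]
  have hSLS : S * L * Sᵀ = Q * diagonal μ * Qᵀ :=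
    calc S * L * Sᵀ = S * L * (Pᵀ * P) * Sᵀ := by rw [hP, Matrix.mul_one]
      _ = Q * diagonal μ * Qᵀ := by
          simp only [Q, transpose_mul, transpose_transpose, Matrix.mul_assoc]
          rw [← Matrix.mul_assoc L, hLP, Matrix.mul_assoc]
  have hsymm : (Qᵀ * Q).IsSymm := by simp [IsSymm, transpose_mul]
  have hidem : IsIdempotentElem (Qᵀ * Q) := by
    rw [IsIdempotentElem, Matrix.mul_assoc, ← Matrix.mul_assoc Q, hQ, Matrix.one_mul]
  have hmass : ∑ k, (Qᵀ * Q) k k = s.card := by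
    change (Qᵀ * Q).trace = _
    rw [trace_mul_comm, hQ, trace_one, hs]
  rw [hSLS, trace_mul_diagonal_mul_transpose]
  exact s.sum_le_sum_mul_of_le_of_sum_eq_card μ _ hsep
    (diag_mem_Icc_of_isSymm_of_isIdempotentElem hsymm hidem) hmass

theorem trace_mul_mul_transpose_eq_sum [Fintype m] [DecidableEq m] (L : Matrix n n ℝ)
    (S : Matrix m n ℝ) (ν : m → ℝ) (hS : S * Sᵀ = 1) (hLS : L * Sᵀ = Sᵀ * diagonal ν) :
    (S * L * Sᵀ).trace = ∑ i, ν i := by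
  rw [Matrix.mul_assoc, hLS, ← Matrix.mul_assoc, hS, Matrix.one_mul, trace_diagonal]

theorem IsSymm.transpose_nonsing_inv_mul_transpose_mul [DecidableEq n] {G : Matrix n n ℝ}
    (hG : G.IsSymm) (hdet : IsUnit G.det) (S : Matrix m n ℝ) : (G⁻¹ * Sᵀ)ᵀ * G = S := by
  rw [transpose_mul, transpose_transpose, transpose_nonsing_inv, hG.eq]
  exact nonsing_inv_mul_cancel_right G S hdet

end Matrix

theorem Fin.le_of_mem_map_castLEEmb_of_notMem {N d : ℕ} (hd : d ≤ N) {i j : Fin N}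
    (hi : i ∈ Finset.univ.map (Fin.castLEEmb hd))
    (hj : j ∉ Finset.univ.map (Fin.castLEEmb hd)) : i ≤ j := by
  obtain ⟨i, -, rfl⟩ := Finset.mem_map.mp hi
  by_contra! hlt
  exact hj (Finset.mem_map.mpr ⟨⟨j, (Fin.lt_def.mp hlt).trans i.2⟩, Finset.mem_univ _, rfl⟩)

theorem dual_gmcca_optimal_value_general {M N d : ℕ} (hd : d ≤ N) (Dm : Fin M → ℕ)
    (X : ∀ m, Matrix (Fin (Dm m)) (Fin N) ℝ)
    (hX : ∀ m, IsUnit ((X m)ᵀ * X m))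
    (L : Matrix (Fin N) (Fin N) ℝ)
    (γ : ℝ) (hγ : 0 ≤ γ)
    (mu : Fin N → ℝ) (hmu : Monotone mu)
    (V : Fin N → (Fin N → ℝ))
    (horth : ∀ i j, V i ⬝ᵥ V j = if i = j then (1 : ℝ) else 0)
    (heig : ∀ i, L *ᵥ V i = mu i • V i) :
    IsLeast
      {t : ℝ | ∃ (A : ∀ m, Matrix (Fin N) (Fin d) ℝ)
          (S : Matrix (Fin d) (Fin N) ℝ), S * Sᵀ = 1 ∧
          t = (∑ m, frobSq ((A m)ᵀ * ((X m)ᵀ * X m) - S))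
              + γ * (S * L * Sᵀ).trace}
      (γ * ∑ i : Fin d, mu (Fin.castLE hd i)) ∧
    ∀ S : Matrix (Fin d) (Fin N) ℝ,
      S = Matrix.of (fun i : Fin d => V (Fin.castLE hd i)) →
      (∑ m, frobSq (((((X m)ᵀ * X m)⁻¹ * Sᵀ)ᵀ) * ((X m)ᵀ * X m) - S))
          + γ * (S * L * Sᵀ).trace
        = γ * ∑ i : Fin d, mu (Fin.castLE hd i) := by
  set S₀ := Matrix.of fun i : Fin d => V (Fin.castLE hd i)
  have hS₀ : S₀ * S₀ᵀ = 1 := of_mul_transpose_of_eq_one _ fun i j => by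
    simpa [(Fin.castLE_injective hd).eq_iff] using horth (Fin.castLE hd i) (Fin.castLE hd j)
  have hval : (∑ m, frobSq (((((X m)ᵀ * X m)⁻¹ * S₀ᵀ)ᵀ) * ((X m)ᵀ * X m) - S₀))
      + γ * (S₀ * L * S₀ᵀ).trace = γ * ∑ i : Fin d, mu (Fin.castLE hd i) := by
    have hLS₀ := mul_transpose_of_eq_transpose_of_mul_diagonal L _ _
      fun i => heig (Fin.castLE hd i)
    have hG : ∀ m, ((X m)ᵀ * X m).IsSymm := fun m => by
      simp [IsSymm, transpose_mul]
    simp only [trace_mul_mul_transpose_eq_sum L S₀ _ hS₀ hLS₀,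
      (hG _).transpose_nonsing_inv_mul_transpose_mul ((isUnit_iff_isUnit_det _).mp (hX _)),
      sub_self, frobSq_zero, Finset.sum_const_zero, zero_add]
  refine ⟨⟨⟨fun m => ((X m)ᵀ * X m)⁻¹ * S₀ᵀ, S₀, hS₀, hval.symm⟩, ?_⟩, fun S hS => hS ▸ hval⟩
  rintro t ⟨A, S, hS, rfl⟩
  have hP : (of V)ᵀ * of V = 1 :=
    mul_eq_one_comm.mp (of_mul_transpose_of_eq_one V horth)
  have hfan := sum_le_trace_mul_mul_transpose L _ mu hP
    (mul_transpose_of_eq_transpose_of_mul_diagonal L V mu heig) _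
    (fun i hi j hj => hmu (Fin.le_of_mem_map_castLEEmb_of_notMem hd hi hj)) (by simp) S hS
  simp only [Finset.sum_map, Fin.coe_castLEEmb] at hfan
  have hfrob : 0 ≤ ∑ m, frobSq ((A m)ᵀ * ((X m)ᵀ * X m) - S) :=
    Finset.sum_nonneg fun m _ => frobSq_nonneg _
  linarith [mul_le_mul_of_nonneg_left hfan hγ]

/-- Unregularized dual GMCCA: if each `Xₘᵀ Xₘ` is invertible and `L` is a graph
Laplacian with eigenvalues `μ₁ ≤ … ≤ μ_N` (given by a monotone `mu` together
with an orthonormal family of eigenvectors `V`), the minimum of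
`∑ₘ ‖Aₘᵀ Xₘᵀ Xₘ - S‖_F² + γ Tr(S L Sᵀ)` over all duals `Aₘ ∈ ℝ^{N×d}` and
`S ∈ ℝ^{d×N}` with `S Sᵀ = I_d` equals `γ ∑_{i=1}^d μᵢ`; it is attained when
the rows of `S` are the orthonormal eigenvectors of `L` associated with its
`d` smallest eigenvalues and `Aₘ = (Xₘᵀ Xₘ)⁻¹ Sᵀ` — so the optimal `S` does not
depend on the data. -/
theorem dual_gmcca_optimal_value {M N d : ℕ} (hd : d ≤ N) (Dm : Fin M → ℕ)
    (X : ∀ m, Matrix (Fin (Dm m)) (Fin N) ℝ)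
    (hX : ∀ m, IsUnit ((X m)ᵀ * X m))
    (L : Matrix (Fin N) (Fin N) ℝ) (hL : L.PosSemidef)
    (γ : ℝ) (hγ : 0 ≤ γ)
    (mu : Fin N → ℝ) (hmu : Monotone mu)
    (V : Fin N → (Fin N → ℝ))
    (horth : ∀ i j, V i ⬝ᵥ V j = if i = j then (1 : ℝ) else 0)
    (heig : ∀ i, L *ᵥ V i = mu i • V i) :
    IsLeast
      {t : ℝ | ∃ (A : ∀ m, Matrix (Fin N) (Fin d) ℝ)
          (S : Matrix (Fin d) (Fin N) ℝ), S * Sᵀ = 1 ∧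
          t = (∑ m, frobSq ((A m)ᵀ * ((X m)ᵀ * X m) - S))
              + γ * (S * L * Sᵀ).trace}
      (γ * ∑ i : Fin d, mu (Fin.castLE hd i)) ∧
    ∀ S : Matrix (Fin d) (Fin N) ℝ,
      S = Matrix.of (fun i : Fin d => V (Fin.castLE hd i)) →
      (∑ m, frobSq (((((X m)ᵀ * X m)⁻¹ * Sᵀ)ᵀ) * ((X m)ᵀ * X m) - S))
          + γ * (S * L * Sᵀ).trace
        = γ * ∑ i : Fin d, mu (Fin.castLE hd i) :=
  dual_gmcca_optimal_value_general hd Dm X hX L γ hγ mu hmu V horth heig
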